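/- arXiv:math/0504100 — 2 statements merged into one kernel-verified Lean document; each statement's English description precedes it below -/
import Mathlib

section
/- Let G be a group, G₀ a normal subgroup, A a right G-module, and F: G₀ → A a map satisfying F(f⁻¹gf) = F(g)·f for all g ∈ G₀, f ∈ G, and F(gh) = F(g) + F(h) for g,h ∈ G₀. Let H ≤ G be a subgroup with H·G₀ = G and H ∩ G₀ = ker F, and let σ: G/G₀ → H be a set-theoretic section of the projection p: G → G/G₀ with image in H. Then F^σ(g) := F(σ(p(g))⁻¹ g) defines a crossed homomorphism G → A extending F, and ker F^σ = H. -/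
/-!
Every `g` factors as `σ(p g) · u` with `u ∈ G₀`, and `F^σ(g) = F u`. Writing `s_x = σ(p x)`, one has
`s_{fg}⁻¹ f g = t · (s_g⁻¹ g) · g⁻¹ (s_f⁻¹ f) g` with `t = s_{fg}⁻¹ s_f s_g ∈ H ∩ G₀ = ker F`, so
additivity and equivariance of `F` on `G₀` give the cocycle identity. The kernel is `H` because
`σ` takes values in `H` and `H ∩ G₀ = ker F`.
-/

section

variable {G A : Type*} [Group G] [AddCommGroup A] {G₀ : Subgroup G} {F : G → A}

theorem map_mul_of_map_eq_zero_left (hF_add : ∀ g ∈ G₀, ∀ h ∈ G₀, F (g * h) = F g + F h)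
    {u v : G} (hu : u ∈ G₀) (hv : v ∈ G₀) (hFu : F u = 0) : F (u * v) = F v := by
  rw [hF_add u hu v hv, hFu, zero_add]

variable {σ : G ⧸ G₀ → G}

def extendBySection (F : G → A) (σ : G ⧸ G₀ → G) (g : G) : A :=
  F ((σ (g : G ⧸ G₀))⁻¹ * g)

theorem inv_section_mul_mem (hσ : ∀ x, (σ x : G ⧸ G₀) = x) (g : G) :
    (σ (g : G ⧸ G₀))⁻¹ * g ∈ G₀ :=
  QuotientGroup.eq.mp (hσ g)

theorem section_mem_of_mem (hσ : ∀ x, (σ x : G ⧸ G₀) = x) {g : G} (hg : g ∈ G₀) :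
    σ (g : G ⧸ G₀) ∈ G₀ := by
  have h := G₀.mul_mem hg (G₀.inv_mem (inv_section_mul_mem hσ g))
  rwa [mul_inv_rev, inv_inv, mul_inv_cancel_left] at h

theorem inv_section_mul_section_mul_mem [G₀.Normal] (hσ : ∀ x, (σ x : G ⧸ G₀) = x) (f g : G) :
    (σ ((f * g : G) : G ⧸ G₀))⁻¹ * (σ (f : G ⧸ G₀) * σ (g : G ⧸ G₀)) ∈ G₀ := by
  refine QuotientGroup.eq.mp ?_
  rw [hσ, QuotientGroup.mk_mul, QuotientGroup.mk_mul, hσ, hσ]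

variable {H : Subgroup G}

theorem extendBySection_mul [G₀.Normal] (act : A → G → A)
    (hF_conj : ∀ g ∈ G₀, ∀ f : G, F (f⁻¹ * g * f) = act (F g) f)
    (hF_add : ∀ g ∈ G₀, ∀ h ∈ G₀, F (g * h) = F g + F h)
    (hker : ∀ g ∈ G₀, g ∈ H → F g = 0) (hσH : ∀ x, σ x ∈ H) (hσ : ∀ x, (σ x : G ⧸ G₀) = x)
    (f g : G) :
    extendBySection F σ (f * g) = extendBySection F σ g + act (extendBySection F σ f) g := by
  set t := (σ ((f * g : G) : G ⧸ G₀))⁻¹ * (σ (f : G ⧸ G₀) * σ (g : G ⧸ G₀))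
  set u := (σ (f : G ⧸ G₀))⁻¹ * f
  set v := (σ (g : G ⧸ G₀))⁻¹ * g
  have ht : t ∈ G₀ := inv_section_mul_section_mul_mem hσ f g
  have hFt : F t = 0 := hker t ht (H.mul_mem (H.inv_mem (hσH _)) (H.mul_mem (hσH _) (hσH _)))
  have hu : u ∈ G₀ := inv_section_mul_mem hσ f
  have hv : v ∈ G₀ := inv_section_mul_mem hσ g
  have hw : g⁻¹ * u * g ∈ G₀ := by simpa using Subgroup.Normal.conj_mem ‹_› u hu g⁻¹
  have hdecomp : (σ ((f * g : G) : G ⧸ G₀))⁻¹ * (f * g) = t * (v * (g⁻¹ * u * g)) := by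
    simp only [t, u, v]
    group
  calc F ((σ ((f * g : G) : G ⧸ G₀))⁻¹ * (f * g))
      = F (v * (g⁻¹ * u * g)) := by
        rw [hdecomp, map_mul_of_map_eq_zero_left hF_add ht (G₀.mul_mem hv hw) hFt]
    _ = F v + act (F u) g := by rw [hF_add v hv _ hw, hF_conj u hu g]

theorem extendBySection_of_mem (hF_add : ∀ g ∈ G₀, ∀ h ∈ G₀, F (g * h) = F g + F h)
    (hker : ∀ g ∈ G₀, g ∈ H → F g = 0) (hσH : ∀ x, σ x ∈ H) (hσ : ∀ x, (σ x : G ⧸ G₀) = x)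
    {g : G} (hg : g ∈ G₀) : extendBySection F σ g = F g := by
  have hs : (σ (g : G ⧸ G₀))⁻¹ ∈ G₀ := G₀.inv_mem (section_mem_of_mem hσ hg)
  exact map_mul_of_map_eq_zero_left hF_add hs hg (hker _ hs (H.inv_mem (hσH _)))

theorem extendBySection_eq_zero_iff (hker : ∀ g ∈ G₀, (g ∈ H ↔ F g = 0)) (hσH : ∀ x, σ x ∈ H)
    (hσ : ∀ x, (σ x : G ⧸ G₀) = x) (g : G) : extendBySection F σ g = 0 ↔ g ∈ H := by
  rw [extendBySection, ← hker _ (inv_section_mul_mem hσ g),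
    Subgroup.mul_mem_cancel_left H (H.inv_mem (hσH _))]

end

theorem Fsigma_crossed_hom_extends_and_kernel_general
    {G A : Type*} [Group G] [AddCommGroup A]
    (G₀ : Subgroup G) [G₀.Normal]
    (act : A → G → A)
    (F : G → A)
    (hF_conj : ∀ g ∈ G₀, ∀ f : G, F (f⁻¹ * g * f) = act (F g) f)
    (hF_add : ∀ g ∈ G₀, ∀ h ∈ G₀, F (g * h) = F g + F h)
    (H : Subgroup G)
    (hker : ∀ g ∈ G₀, (g ∈ H ↔ F g = 0))
    (σ : G ⧸ G₀ → G)
    (hσH : ∀ x, σ x ∈ H)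
    (hσ : ∀ x, QuotientGroup.mk (σ x) = x) :
    -- F^σ is a crossed homomorphism: F^σ(fg) = F^σ(g) + F^σ(f)·g
    (∀ f g : G,
      F ((σ (QuotientGroup.mk (f * g)))⁻¹ * (f * g)) =
        F ((σ (QuotientGroup.mk g))⁻¹ * g) +
          act (F ((σ (QuotientGroup.mk f))⁻¹ * f)) g) ∧
    -- F^σ extends F
    (∀ g ∈ G₀, F ((σ (QuotientGroup.mk g))⁻¹ * g) = F g) ∧
    -- ker F^σ = H
    (∀ g : G, F ((σ (QuotientGroup.mk g))⁻¹ * g) = 0 ↔ g ∈ H) := by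
  have hker_mp : ∀ g ∈ G₀, g ∈ H → F g = 0 := fun g hg => (hker g hg).mp
  exact ⟨extendBySection_mul act hF_conj hF_add hker_mp hσH hσ,
    fun g hg => extendBySection_of_mem hF_add hker_mp hσH hσ hg,
    extendBySection_eq_zero_iff hker hσH hσ⟩

/-- Let `G` be a group, `G₀` a normal subgroup, `A` a right `G`-module and
`F : G₀ → A` additive and `G`-equivariant (`F(f⁻¹gf) = F(g)·f`). Let `H ≤ G` satisfy
`H·G₀ = G` and `H ∩ G₀ = ker F`, and let `σ : G/G₀ → H` be a set-theoretic section of the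
projection `p : G → G/G₀` with image in `H`. Then `F^σ(g) := F(σ(p(g))⁻¹ g)` is a crossed
homomorphism `G → A` extending `F`, with kernel exactly `H`. -/
theorem Fsigma_crossed_hom_extends_and_kernel
    {G A : Type*} [Group G] [AddCommGroup A]
    (G₀ : Subgroup G) [G₀.Normal]
    (act : A → G → A)
    (hact_one : ∀ a, act a 1 = a)
    (hact_mul : ∀ a g h, act a (g * h) = act (act a g) h)
    (hact_add : ∀ a b g, act (a + b) g = act a g + act b g)
    (F : G → A)
    (hF_conj : ∀ g ∈ G₀, ∀ f : G, F (f⁻¹ * g * f) = act (F g) f)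
    (hF_add : ∀ g ∈ G₀, ∀ h ∈ G₀, F (g * h) = F g + F h)
    (H : Subgroup G)
    (hHG₀ : ∀ g : G, ∃ h ∈ H, ∃ k ∈ G₀, g = h * k)
    (hker : ∀ g ∈ G₀, (g ∈ H ↔ F g = 0))
    (σ : G ⧸ G₀ → G)
    (hσH : ∀ x, σ x ∈ H)
    (hσ : ∀ x, QuotientGroup.mk (σ x) = x) :
    -- F^σ is a crossed homomorphism: F^σ(fg) = F^σ(g) + F^σ(f)·g
    (∀ f g : G,
      F ((σ (QuotientGroup.mk (f * g)))⁻¹ * (f * g)) =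
        F ((σ (QuotientGroup.mk g))⁻¹ * g) +
          act (F ((σ (QuotientGroup.mk f))⁻¹ * f)) g) ∧
    -- F^σ extends F
    (∀ g ∈ G₀, F ((σ (QuotientGroup.mk g))⁻¹ * g) = F g) ∧
    -- ker F^σ = H
    (∀ g : G, F ((σ (QuotientGroup.mk g))⁻¹ * g) = 0 ↔ g ∈ H) :=
  Fsigma_crossed_hom_extends_and_kernel_general G₀ act F hF_conj hF_add H hker σ hσH hσ
end

section
/- Let (M, ω) be a closed 2n-dimensional symplectic manifold and M → E → B a fibration such that π₁(B) acts trivially on H^{2n}(M; ℝ). Let τ ∈ E₃^{0,2} be a class (in the Leray–Serre spectral sequence with real coefficients) restricting to [ω], surviving to the E₃ page, with τ^{n+1} = 0 (as [ω]^{n+1} lives in H^{2n+2}(M) = 0 on the fiber). Then d₃(τ) ⊗ [ω^n] = 0 in E₃^{3,2n}; in particular if the cup-product pairing E₃^{3,0} ⊗ H^{2n}(M;ℝ) → E₃^{3,2n} is injective then d₃(τ) = 0 over ℝ, i.e. d₃(τ) is torsion in the integral spectral sequence. -/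
theorem Derivation.pow_smul_eq_zero_of_pow_succ_eq_zero {R A M : Type*} [CommSemiring R]
    [CommSemiring A] [Algebra R A] [AddCommMonoid M] [Module A M] [Module R M]
    [IsAddTorsionFree M] (D : Derivation R A M) {a : A} {n : ℕ} (ha : a ^ (n + 1) = 0) :
    a ^ n • D a = 0 := by
  -- `0 = D (a ^ (n + 1)) = (n + 1) • a ^ n • D a`, and `n + 1` cancels in `M`
  have h := D.leibniz_pow (a := a) (n + 1)
  rw [ha, map_zero, Nat.add_sub_cancel, eq_comm, nsmul_eq_zero_iff] at h
  exact h.resolve_right n.succ_ne_zero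

/-- (Algebraic core of the spectral sequence argument, Leray–Serre with real
coefficients.) The differential `d₃` is a derivation on the graded-commutative algebra
`E₃`; if `τ` (the class restricting to `[ω]`, of even total degree, so that the ring it
generates is commutative) satisfies `τ^{n+1} = 0` — as `[ω]^{n+1}` lives in
`H^{2n+2}(M) = 0` — then `0 = d₃(τ^{n+1}) = (n+1)·d₃(τ)·τ^n`, so over `ℝ`
`d₃(τ) · τ^n = 0` (i.e. `d₃(τ) ⊗ [ω^n] = 0` in `E₃^{3,2n}`); in particular, if
multiplication by `τ^n` (the cup-product pairing `E₃^{3,0} ⊗ H^{2n}(M;ℝ) → E₃^{3,2n}`)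
is injective then `d₃(τ) = 0` over `ℝ`, i.e. `d₃(τ)` is torsion integrally. -/
theorem d3_tau_mul_tau_pow_eq_zero
    {A : Type*} [CommRing A] [Algebra ℝ A]
    (d : Derivation ℝ A A) (n : ℕ) (τ : A)
    (h : τ ^ (n + 1) = 0) :
    d τ * τ ^ n = 0 ∧
      (Function.Injective (fun x : A => x * τ ^ n) → d τ = 0) := by
  have : IsAddTorsionFree A := .of_isTorsionFree ℝ A
  have hdτ : d τ * τ ^ n = 0 := by
    rw [mul_comm, ← smul_eq_mul]
    exact d.pow_smul_eq_zero_of_pow_succ_eq_zero h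
  exact ⟨hdτ, fun hinj => hinj (hdτ.trans (zero_mul _).symm)⟩
end
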